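/- Let H be a real Hilbert space, let A be a maximally monotone set-valued operator on H, let B : H → H be monotone and L-Lipschitz with L > 0, let ε > 0 and λ ∈ [ε, (1 − 3ε)/(3L)], and let J denote the resolvent of λA. Let x_0, x_{−1} ∈ H, define x_{k+1} = J(x_k − λB(x_k)) − λ(B(x_k) − B(x_{k−1})) for k ≥ 0, and set y_k = λB(x_k) and z_k = x_k + y_{k−1}. Then for every x ∈ H with −B(x) ∈ A(x), setting z = x + λB(x), the following Lyapunov decrease holds for all k ≥ 0: ‖z_{k+1} − z‖² + (1/3 + ε)‖x_{k+1} − x_k‖² ≤ ‖z_k − z‖² + (1/3)‖x_k − x_{k−1}‖². -/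

import Mathlib

open scoped RealInnerProductSpace

def IsMonotoneOp {H : Type*} [NormedAddCommGroup H] [InnerProductSpace ℝ H]
    (A : Set (H × H)) : Prop :=
  ∀ p ∈ A, ∀ q ∈ A, (0 : ℝ) ≤ ⟪p.2 - q.2, p.1 - q.1⟫

def IsMaximalMonotoneOp {H : Type*} [NormedAddCommGroup H] [InnerProductSpace ℝ H]
    (A : Set (H × H)) : Prop :=
  IsMonotoneOp A ∧
    ∀ p : H × H, (∀ q ∈ A, (0 : ℝ) ≤ ⟪p.2 - q.2, p.1 - q.1⟫) → p ∈ A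

def smulOp {H : Type*} [NormedAddCommGroup H] [InnerProductSpace ℝ H]
    (c : ℝ) (A : Set (H × H)) : Set (H × H) :=
  (fun p : H × H => (p.1, c • p.2)) '' A

/-!
Write `z_k = x_k + λB(x_{k-1})`, `z = p + λBp` and `r = λ(Bx_k - Bx_{k-1})`. Since
`J(x_k - λBx_k) = x_{k+1} + λBx_k - λBx_{k-1}`, the difference `‖z_k - z‖² - ‖z_{k+1} - z‖²`
is twice the monotonicity gap of `λA` between this resolvent point and `(p, -λBp)`, plus twice
the monotonicity gap of `λB` at `(x_k, p)`, plus `‖(x_{k+1} - x_k) + 2r‖² - ‖r‖²`. Both gaps are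
nonnegative, and `‖r‖ ≤ λL‖x_k - x_{k-1}‖ ≤ (1/3 - ε)‖x_k - x_{k-1}‖`; what remains is a scalar
quadratic inequality in `‖x_{k+1} - x_k‖`, `‖r‖` and `‖x_k - x_{k-1}‖`, settled by a sum of squares.
-/

section

variable {H : Type*} [NormedAddCommGroup H] [InnerProductSpace ℝ H]

theorem mem_smulOp {A : Set (H × H)} (c : ℝ) {p : H × H} (hp : p ∈ A) :
    (p.1, c • p.2) ∈ smulOp c A :=
  ⟨p, hp, rfl⟩

theorem IsMonotoneOp.smulOp {A : Set (H × H)} (hA : IsMonotoneOp A) {c : ℝ} (hc : 0 ≤ c) :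
    IsMonotoneOp (smulOp c A) := by
  rintro _ ⟨p, hp, rfl⟩ _ ⟨q, hq, rfl⟩
  simpa only [← smul_sub, real_inner_smul_left] using mul_nonneg hc (hA p hp q hq)

theorem lyapunov_scalar_bound {ε D R E : ℝ} (hε : 0 < ε) (hε3 : ε < 1 / 3) (hR : 0 ≤ R)
    (hRE : R ≤ (1 / 3 - ε) * E) :
    (1 / 3 + ε) * D ^ 2 ≤ (D - 2 * R) ^ 2 - R ^ 2 + E ^ 2 / 3 := by
  set t := 1 / 3 - ε with ht_def
  set c := 2 / 3 - ε with hc_def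
  have ht : 0 < t := by linarith
  have hc : 0 < c := by linarith
  have hε2 : 0 < 2 - 9 * ε ^ 2 := by nlinarith
  have hgap : 0 ≤ c * ((t * E) ^ 2 - R ^ 2) :=
    mul_nonneg hc.le (sub_nonneg.2 (pow_le_pow_left₀ hR hRE 2))
  have hsos :
      0 ≤ 3 * t ^ 2 * c * ((D - 2 * R) ^ 2 - R ^ 2 + E ^ 2 / 3 - (1 / 3 + ε) * D ^ 2) := by
    rw [show 3 * t ^ 2 * c * ((D - 2 * R) ^ 2 - R ^ 2 + E ^ 2 / 3 - (1 / 3 + ε) * D ^ 2) =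
      3 * t ^ 2 * (c * D - 2 * R) ^ 2 + c * ((t * E) ^ 2 - R ^ 2)
        + ε * (2 - 9 * ε ^ 2) * R ^ 2 by ring]
    positivity
  linarith [nonneg_of_mul_nonneg_right hsos (by positivity)]

theorem sq_norm_sub_two_mul_norm_le_sq_norm_add {E : Type*} [SeminormedAddCommGroup E]
    [NormedSpace ℝ E] (d r : E) :
    (‖d‖ - 2 * ‖r‖) ^ 2 ≤ ‖d + (2 : ℝ) • r‖ ^ 2 := by
  have h := abs_norm_sub_norm_le d (-((2 : ℝ) • r))
  rw [norm_neg, norm_smul, Real.norm_two, sub_neg_eq_add] at h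
  exact sq_le_sq.2 (h.trans_eq (abs_norm _).symm)

theorem shadowDR_lyapunov_step {ε : ℝ} (hε : 0 < ε) (hε3 : ε < 1 / 3) {x₀ x₁ x₂ p y₀ y₁ y : H}
    (hA : 0 ≤ ⟪x₁ - y₁ - (x₂ + y₁ - y₀) + y, x₂ + y₁ - y₀ - p⟫)
    (hB : 0 ≤ ⟪y₁ - y, x₁ - p⟫) (hlip : ‖y₁ - y₀‖ ≤ (1 / 3 - ε) * ‖x₁ - x₀‖) :
    ‖x₂ + y₁ - (p + y)‖ ^ 2 + (1 / 3 + ε) * ‖x₂ - x₁‖ ^ 2 ≤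
      ‖x₁ + y₀ - (p + y)‖ ^ 2 + 1 / 3 * ‖x₁ - x₀‖ ^ 2 := by
  have hid : ‖x₁ + y₀ - (p + y)‖ ^ 2 - ‖x₂ + y₁ - (p + y)‖ ^ 2 =
      2 * ⟪x₁ - y₁ - (x₂ + y₁ - y₀) + y, x₂ + y₁ - y₀ - p⟫ + 2 * ⟪y₁ - y, x₁ - p⟫
        + ‖x₂ - x₁ + (2 : ℝ) • (y₁ - y₀)‖ ^ 2 - ‖y₁ - y₀‖ ^ 2 := by
    simp only [← real_inner_self_eq_norm_sq, inner_add_left, inner_add_right, inner_sub_left,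
      inner_sub_right, real_inner_smul_left, real_inner_smul_right]
    simp only [real_inner_comm]
    ring
  linarith [sq_norm_sub_two_mul_norm_le_sq_norm_add (x₂ - x₁) (y₁ - y₀),
    lyapunov_scalar_bound (D := ‖x₂ - x₁‖) hε hε3 (norm_nonneg _) hlip]

end

theorem statement9_general
    {H : Type*} [NormedAddCommGroup H] [InnerProductSpace ℝ H]
    (A : Set (H × H)) (hA : IsMaximalMonotoneOp A)
    (B : H → H) (hBmono : ∀ u v : H, (0 : ℝ) ≤ ⟪B u - B v, u - v⟫)
    (L : ℝ) (hL : 0 < L) (hBlip : ∀ u v : H, ‖B u - B v‖ ≤ L * ‖u - v‖)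
    (ε lam : ℝ) (hε : 0 < ε) (hlam1 : ε ≤ lam) (hlam2 : lam ≤ (1 - 3 * ε) / (3 * L))
    (J : H → H) (hJ : ∀ w : H, (J w, w - J w) ∈ smulOp lam A)
    (x : ℤ → H)
    (hrec : ∀ k : ℤ, 0 ≤ k →
      x (k + 1) = J (x k - lam • B (x k)) - lam • (B (x k) - B (x (k - 1))))
    (p : H) (hp : (p, -B p) ∈ A)
    (k : ℤ) (hk : 0 ≤ k) :
    ‖(x (k + 1) + lam • B (x k)) - (p + lam • B p)‖ ^ 2
        + (1 / 3 + ε) * ‖x (k + 1) - x k‖ ^ 2 ≤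
      ‖(x k + lam • B (x (k - 1))) - (p + lam • B p)‖ ^ 2
        + (1 / 3) * ‖x k - x (k - 1)‖ ^ 2 := by
  have hlam : 0 < lam := hε.trans_le hlam1
  have hlamL : lam * L ≤ 1 / 3 - ε := by
    rw [le_div_iff₀ (by positivity)] at hlam2
    linarith
  have hε3 : ε < 1 / 3 := by nlinarith [mul_pos hlam hL]
  have hJx : J (x k - lam • B (x k)) = x (k + 1) + lam • B (x k) - lam • B (x (k - 1)) := by
    rw [hrec k hk]
    module
  have hAstep := hA.1.smulOp hlam.le _ (hJ (x k - lam • B (x k))) _ (mem_smulOp lam hp)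
  rw [hJx, smul_neg, sub_neg_eq_add] at hAstep
  have hBstep : 0 ≤ ⟪lam • B (x k) - lam • B p, x k - p⟫ := by
    rw [← smul_sub, real_inner_smul_left]
    exact mul_nonneg hlam.le (hBmono _ _)
  have hlip : ‖lam • B (x k) - lam • B (x (k - 1))‖ ≤ (1 / 3 - ε) * ‖x k - x (k - 1)‖ :=
    calc ‖lam • B (x k) - lam • B (x (k - 1))‖ = lam * ‖B (x k) - B (x (k - 1))‖ := by
          rw [← smul_sub, norm_smul, Real.norm_of_nonneg hlam.le]
      _ ≤ lam * (L * ‖x k - x (k - 1)‖) := by gcongr; exact hBlip _ _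
      _ ≤ (1 / 3 - ε) * ‖x k - x (k - 1)‖ := by rw [← mul_assoc]; gcongr
  exact shadowDR_lyapunov_step hε hε3 hAstep hBstep hlip

/-- Inequality (27) of the paper: the Lyapunov decrease
`‖z_{k+1} − z‖² + (1/3 + ε)‖x_{k+1} − x_k‖² ≤ ‖z_k − z‖² + (1/3)‖x_k − x_{k−1}‖²`
for the shadow Douglas–Rachford iteration, where `y_k = λB(x_k)`,
`z_k = x_k + y_{k−1}` and `z = x + λB(x)` for a zero `x` of `A + B`. -/
theorem statement9
    {H : Type*} [NormedAddCommGroup H] [InnerProductSpace ℝ H] [CompleteSpace H]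
    (A : Set (H × H)) (hA : IsMaximalMonotoneOp A)
    (B : H → H) (hBmono : ∀ u v : H, (0 : ℝ) ≤ ⟪B u - B v, u - v⟫)
    (L : ℝ) (hL : 0 < L) (hBlip : ∀ u v : H, ‖B u - B v‖ ≤ L * ‖u - v‖)
    (ε lam : ℝ) (hε : 0 < ε) (hlam1 : ε ≤ lam) (hlam2 : lam ≤ (1 - 3 * ε) / (3 * L))
    (J : H → H) (hJ : ∀ w : H, (J w, w - J w) ∈ smulOp lam A)
    (x : ℤ → H)
    (hrec : ∀ k : ℤ, 0 ≤ k →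
      x (k + 1) = J (x k - lam • B (x k)) - lam • (B (x k) - B (x (k - 1))))
    (p : H) (hp : (p, -B p) ∈ A)
    (k : ℤ) (hk : 0 ≤ k) :
    ‖(x (k + 1) + lam • B (x k)) - (p + lam • B p)‖ ^ 2
        + (1 / 3 + ε) * ‖x (k + 1) - x k‖ ^ 2 ≤
      ‖(x k + lam • B (x (k - 1))) - (p + lam • B p)‖ ^ 2
        + (1 / 3) * ‖x k - x (k - 1)‖ ^ 2 :=
  statement9_general A hA B hBmono L hL hBlip ε lam hε hlam1 hlam2 J hJ x hrec p hp k hk
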